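/- Label-free feature importance is invariant under orthogonal transformations of the latent space: for any linear map T : H → H preserving the inner product, b_i(T ∘ f, x) = b_i(f, x) for all x ∈ X and i ∈ [d_X]. -/

import Mathlib

open RealInnerProductSpace in
theorem label_free_feature_importance_invariance
    {X : Type*} {H : Type*} [NormedAddCommGroup H] [InnerProductSpace ℝ H]
    (dX : ℕ) (f : X → H) (a : Fin dX → (X → ℝ) → X → ℝ)
    (T : H →ₗ[ℝ] H) (hT : ∀ h₁ h₂ : H, ⟪T h₁, T h₂⟫ = ⟪h₁, h₂⟫) :
    ∀ (i : Fin dX) (x : X),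
      a i (fun y => ⟪T (f x), T (f y)⟫) x = a i (fun y => ⟪f x, f y⟫) x := by
  intro i x
  have latent_kernel_eq : (fun y => ⟪T (f x), T (f y)⟫) = fun y => ⟪f x, f y⟫ :=
    funext fun y => hT (f x) (f y)
  rw [latent_kernel_eq]
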